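/- In the diagonal construction on the bi-tree, the set F = { q_{a,k} : a a binary string of length M, 0 ≤ k ≤ 2^s } has capacity comparable to 1: there exist an absolute constant c₀ > 0 and s₀ such that for every integer s ≥ s₀, c₀ ≤ cap(F) ≤ 1. -/

import Mathlib

open Finset

def strings : ℕ → Finset (List Bool)
  | 0 => {([] : List Bool)}
  | N + 1 =>
      {([] : List Bool)} ∪ (strings N).image (List.cons true) ∪ (strings N).image (List.cons false)

/-- Vertices of the bi-tree `T²` of depth `N`: pairs of binary strings of length at most `N`,
ordered by `(α,β) ≤ (α',β')` iff `α' <+: α` and `β' <+: β`. -/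
def biVertices (N : ℕ) : Finset (List Bool × List Bool) := strings N ×ˢ strings N

/-- `𝕀 f (p) = ∑_{p' ≥ p} f p'`. -/
noncomputable def biI (N : ℕ) (f : List Bool × List Bool → ℝ) (p : List Bool × List Bool) : ℝ :=
  ∑ q ∈ (biVertices N).filter (fun q => q.1 <+: p.1 ∧ q.2 <+: p.2), f q

/-- `𝕀* f (p) = ∑_{p' ≤ p} f p'`. -/
noncomputable def biIstar (N : ℕ) (f : List Bool × List Bool → ℝ) (p : List Bool × List Bool) : ℝ :=
  ∑ q ∈ (biVertices N).filter (fun q => p.1 <+: q.1 ∧ p.2 <+: q.2), f q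

/-- The potential `V^μ = 𝕀 (𝕀* μ)` on the bi-tree. -/
noncomputable def biV (N : ℕ) (μ : List Bool × List Bool → ℝ) : List Bool × List Bool → ℝ :=
  biI N (biIstar N μ)

/-- The total mass `|μ|`. -/
noncomputable def biMass (N : ℕ) (μ : List Bool × List Bool → ℝ) : ℝ :=
  ∑ p ∈ biVertices N, μ p

/-- A measure on the boundary `∂T²`: a nonnegative function vanishing off pairs of strings
both of length exactly `N`. -/
def IsBiMeasureOnBoundary (N : ℕ) (μ : List Bool × List Bool → ℝ) : Prop :=
  (∀ p, 0 ≤ μ p) ∧ ∀ p, μ p ≠ 0 → p.1.length = N ∧ p.2.length = N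

/-- The energy `E[ν] = ∑_{α∈T²} (𝕀*ν(α))²`. -/
noncomputable def biEnergy (N : ℕ) (ν : List Bool × List Bool → ℝ) : ℝ :=
  ∑ p ∈ biVertices N, (biIstar N ν p) ^ 2

/-- The partial energy `E_ε[ν] = ∑_{α∈T² : V^ν(α) ≤ ε} (𝕀*ν(α))²`. -/
noncomputable def biPartialEnergy (N : ℕ) (ν : List Bool × List Bool → ℝ) (ε : ℝ) : ℝ :=
  ∑ p ∈ (biVertices N).filter (fun p => biV N ν p ≤ ε), (biIstar N ν p) ^ 2

/-- `cap(E) = inf { ∑ f² : f ≥ 0, 𝕀f ≥ 1 on E }` on the bi-tree of depth `N`. -/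
noncomputable def biCap (N : ℕ) (E : Set (List Bool × List Bool)) : ℝ :=
  sInf { t : ℝ | ∃ f : List Bool × List Bool → ℝ, (∀ p, 0 ≤ f p) ∧
    (∀ p ∈ E, 1 ≤ biI N f p) ∧ t = ∑ p ∈ biVertices N, (f p) ^ 2 }

/-- Superadditivity in each variable on the bi-tree of depth `N`. -/
def BiSuperadditive (N : ℕ) (g : List Bool × List Bool → ℝ) : Prop :=
  (∀ α β : List Bool, α.length < N → β.length ≤ N →
    g (α ++ [false], β) + g (α ++ [true], β) ≤ g (α, β)) ∧
  (∀ α β : List Bool, α.length ≤ N → β.length < N →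
    g (α, β ++ [false]) + g (α, β ++ [true]) ≤ g (α, β))

/-- The rectangle `q_{a,k} = (a 0^{n/2^k}, a 0^{2^k})`, where `n = 2^(2^s)`. -/
def diagQ (s : ℕ) (a : List Bool) (k : ℕ) : List Bool × List Bool :=
  (a ++ List.replicate (2 ^ 2 ^ s / 2 ^ k) false, a ++ List.replicate (2 ^ k) false)

/-- The set `F = { q_{a,k} : a.length = M, 0 ≤ k ≤ 2^s }`, where `M = 2^s − s`. -/
def diagF (s : ℕ) : Set (List Bool × List Bool) :=
  { p | ∃ a : List Bool, ∃ k : ℕ, a.length = 2 ^ s - s ∧ k ≤ 2 ^ s ∧ p = diagQ s a k }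

/-!
The upper bound is witnessed by the unit mass at the root, which lies above every vertex.

For the lower bound, test against the counting measure `μ` of `F`. Duality `∑ μ 𝕀f = ∑ (𝕀*μ) f`
and Cauchy–Schwarz give `|μ|² ≤ E[μ] · cap F`, and expanding the square,
`E[μ] = ∑_{x,y ∈ F} #(common ancestors of x and y)`, which factors over the two coordinates into
numbers of common prefixes. With `K = 2^s`, `n = 2^K = 2^M K` and `|μ| = 2^M (K+1)`:
* if `a ≠ b`, both factors are at most the number `d(a,b)` of agreeing prefixes of `a` and `b`,
  and `∑_{a,b} d(a,b)² = O(4^M)` since `b` agrees with `a` up to length `i` for `2^(M-i)` strings;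
* if `a = b`, the pair `q_{a,k}, q_{a,l}` has `(M + 1 + n/2^max(k,l)) (M + 1 + 2^min(k,l))` common
  ancestors; summed over `k, l` this is `O(2^M (K+1)²)`, the point being that
  `∑_{k,l} 2^(K - max(k,l) + min(k,l)) = O(K 2^K)`.
Hence `E[μ] ≤ 25 |μ|²` and `cap F ≥ 1/25`.
-/

theorem sum_range_succ_sum_range_succ {β : Type*} [AddCommMonoid β] (g : ℕ → ℕ → β) (n : ℕ) :
    ∑ k ∈ range (n + 1), ∑ l ∈ range (n + 1), g k l =
      ∑ k ∈ range n, ∑ l ∈ range n, g k l + ∑ k ∈ range n, (g k n + g n k) + g n n := by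
  simp only [sum_range_succ, sum_add_distrib]
  abel

theorem sum_sum_two_pow_min_le (n : ℕ) :
    ∑ k ∈ range n, ∑ l ∈ range n, 2 ^ min k l ≤ 3 * 2 ^ n := by
  induction n with
  | zero => simp
  | succ n ih =>
    rw [sum_range_succ_sum_range_succ, min_self]
    have hcross : ∑ k ∈ range n, (2 ^ min k n + 2 ^ min n k) = 2 * ∑ k ∈ range n, 2 ^ k := by
      rw [mul_sum]
      refine sum_congr rfl fun k hk => ?_
      rw [min_eq_left (mem_range.mp hk).le, min_eq_right (mem_range.mp hk).le, two_mul]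
    have : ∑ k ∈ range n, 2 ^ k < 2 ^ n := Nat.geomSum_lt le_rfl fun _ => mem_range.mp
    rw [hcross, pow_succ]
    omega

theorem sum_sum_two_pow_sub_max_le (n : ℕ) :
    ∑ k ∈ range n, ∑ l ∈ range n, 2 ^ (n - 1 - max k l) ≤ 3 * 2 ^ n := by
  calc ∑ k ∈ range n, ∑ l ∈ range n, 2 ^ (n - 1 - max k l)
      = ∑ k ∈ range n, ∑ l ∈ range n, 2 ^ min (n - 1 - k) (n - 1 - l) := by
        refine sum_congr rfl fun k hk => sum_congr rfl fun l hl => ?_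
        congr 1
        omega
    _ = ∑ k ∈ range n, ∑ l ∈ range n, 2 ^ min (n - 1 - k) l :=
        sum_congr rfl fun k _ => sum_range_reflect (fun l => 2 ^ min (n - 1 - k) l) n
    _ = ∑ k ∈ range n, ∑ l ∈ range n, 2 ^ min k l :=
        sum_range_reflect (fun k => ∑ l ∈ range n, 2 ^ min k l) n
    _ ≤ 3 * 2 ^ n := sum_sum_two_pow_min_le n

theorem sum_sum_two_pow_sub_max_add_min_le (n : ℕ) :
    ∑ k ∈ range n, ∑ l ∈ range n, 2 ^ (n - 1 - max k l + min k l) ≤ 3 * n * 2 ^ n := by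
  induction n with
  | zero => simp
  | succ n ih =>
    rw [sum_range_succ_sum_range_succ]
    have hshift : ∑ k ∈ range n, ∑ l ∈ range n, 2 ^ (n + 1 - 1 - max k l + min k l) =
        2 * ∑ k ∈ range n, ∑ l ∈ range n, 2 ^ (n - 1 - max k l + min k l) := by
      rw [mul_sum]
      refine sum_congr rfl fun k hk => ?_
      rw [mul_sum]
      refine sum_congr rfl fun l hl => ?_
      simp only [mem_range] at hk hl
      rw [← pow_succ']
      congr 1
      omega
    have hcross : ∑ k ∈ range n, (2 ^ (n + 1 - 1 - max k n + min k n) +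
        2 ^ (n + 1 - 1 - max n k + min n k)) = 2 * ∑ k ∈ range n, 2 ^ k := by
      rw [mul_sum]
      refine sum_congr rfl fun k hk => ?_
      have hkn := (mem_range.mp hk).le
      rw [max_eq_right hkn, max_eq_left hkn, min_eq_left hkn, min_eq_right hkn, two_mul]
      simp
    have : ∑ k ∈ range n, 2 ^ k < 2 ^ n := Nat.geomSum_lt le_rfl fun _ => mem_range.mp
    rw [hshift, hcross, max_self, min_self, Nat.add_sub_cancel, Nat.sub_self, zero_add, pow_succ]
    generalize 2 ^ n = P at *
    nlinarith

theorem succ_sq_le_two_pow {m : ℕ} (hm : 6 ≤ m) : (m + 1) ^ 2 ≤ 2 ^ m := by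
  induction m, hm using Nat.le_induction with
  | base => norm_num
  | succ m hm ih => rw [pow_succ 2 m]; nlinarith

theorem six_le_two_pow_sub_self {s : ℕ} (hs : 4 ≤ s) : 6 ≤ 2 ^ s - s := by
  have h : 2 ^ s = 2 ^ 4 * 2 ^ (s - 4) := by rw [← pow_add, Nat.add_sub_cancel' hs]
  have := (s - 4).lt_two_pow_self
  omega

theorem sum_diagonal_kernel_le {M K : ℕ} (hMK : M ≤ K) (hpow : 2 ^ K = 2 ^ M * K)
    (hM : (M + 1) ^ 2 ≤ 2 ^ M) :
    ∑ k ∈ range (K + 1), ∑ l ∈ range (K + 1),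
      (M + 1 + 2 ^ (K - max k l)) * (M + 1 + 2 ^ min k l) ≤ 19 * 2 ^ M * (K + 1) ^ 2 := by
  have hA := sum_sum_two_pow_sub_max_le (K + 1)
  have hB := sum_sum_two_pow_min_le (K + 1)
  have hC := sum_sum_two_pow_sub_max_add_min_le (K + 1)
  simp only [Nat.add_sub_cancel] at hA hC
  rw [pow_succ, hpow] at hA hB hC
  have hexpand : ∀ k l : ℕ, (M + 1 + 2 ^ (K - max k l)) * (M + 1 + 2 ^ min k l) =
      (M + 1) ^ 2 + (M + 1) * 2 ^ (K - max k l) + (M + 1) * 2 ^ min k l +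
        2 ^ (K - max k l + min k l) := fun k l => by ring
  simp only [hexpand, sum_add_distrib, ← mul_sum, sum_const, card_range, smul_eq_mul]
  generalize 2 ^ M = P at *
  have h1 : (K + 1) * ((K + 1) * (M + 1) ^ 2) ≤ (K + 1) ^ 2 * P := by nlinarith
  have h2 : (M + 1) * ∑ k ∈ range (K + 1), ∑ l ∈ range (K + 1), 2 ^ (K - max k l) ≤
      (K + 1) * (3 * (P * K * 2)) := Nat.mul_le_mul (by omega) hA
  have h3 : (M + 1) * ∑ k ∈ range (K + 1), ∑ l ∈ range (K + 1), 2 ^ min k l ≤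
      (K + 1) * (3 * (P * K * 2)) := Nat.mul_le_mul (by omega) hB
  nlinarith

theorem sum_sum_product_ite_add {α : Type*} [DecidableEq α] (A : Finset α) (B : Finset ℕ)
    (D : ℕ → ℕ → ℕ) (d : α → α → ℕ) :
    ∑ x ∈ A ×ˢ B, ∑ y ∈ A ×ˢ B, ((if x.1 = y.1 then D x.2 y.2 else 0) + d x.1 y.1) =
      A.card * ∑ k ∈ B, ∑ l ∈ B, D k l + B.card ^ 2 * ∑ a ∈ A, ∑ b ∈ A, d a b := by
  have hdiag : ∀ a ∈ A, ∀ k, ∑ b ∈ A, ∑ l ∈ B, (if a = b then D k l else 0) = ∑ l ∈ B, D k l :=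
    fun a ha k => by rw [sum_comm]; simp [sum_ite_eq, ha]
  simp only [sum_product, sum_add_distrib, sum_const, smul_eq_mul]
  rw [sum_congr rfl fun a ha => sum_congr rfl fun k _ => hdiag a ha k, sum_const, smul_eq_mul]
  simp only [← mul_sum]
  ring

theorem mem_strings {N : ℕ} {l : List Bool} : l ∈ strings N ↔ l.length ≤ N := by
  induction N generalizing l with
  | zero => simp [strings, List.length_eq_zero_iff]
  | succ N ih =>
    rcases l with _ | ⟨b, t⟩
    · simp [strings]
    · cases b <;> simp [strings, ih]

def treeLevel (L : ℕ) : Finset (List Bool) := (strings L).filter fun l => l.length = L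

theorem mem_treeLevel {L : ℕ} {l : List Bool} : l ∈ treeLevel L ↔ l.length = L := by
  simp only [treeLevel, mem_filter, mem_strings, and_iff_right_iff_imp]
  exact le_of_eq

theorem card_treeLevel (L : ℕ) : (treeLevel L).card = 2 ^ L := by
  have h : (univ : Finset (List.Vector Bool L)).map
      ⟨List.Vector.toList, List.Vector.toList_injective⟩ = treeLevel L := by
    ext l
    simp only [mem_map, mem_univ, true_and, Function.Embedding.coeFn_mk, mem_treeLevel]
    exact ⟨fun ⟨v, hv⟩ => hv ▸ v.toList_length, fun hl => ⟨⟨l, hl⟩, rfl⟩⟩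
  rw [← h, card_map, card_univ, card_vector, Fintype.card_bool]

theorem card_filter_take_eq {M j : ℕ} (hj : j ≤ M) {a : List Bool} (ha : j ≤ a.length) :
    ((treeLevel M).filter fun b => a.take j = b.take j).card = 2 ^ (M - j) := by
  have hlen : (a.take j).length = j := List.length_take_of_le ha
  rw [← card_treeLevel (M - j)]
  refine card_bij' (fun b _ => b.drop j) (fun t _ => a.take j ++ t) ?_ ?_ ?_ ?_
  · intro b hb
    simp only [mem_filter, mem_treeLevel] at hb ⊢
    rw [List.length_drop, hb.1]
  · intro t ht
    simp only [mem_filter, mem_treeLevel] at ht ⊢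
    refine ⟨by rw [List.length_append, hlen, ht]; omega, ?_⟩
    rw [List.take_left' hlen]
  · intro b hb
    rw [(mem_filter.mp hb).2, List.take_append_drop]
  · intro t _
    exact List.drop_left' hlen

def commonPrefixes (N : ℕ) (u v : List Bool) : Finset (List Bool) :=
  (strings N).filter fun α => α <+: u ∧ α <+: v

def agreeLengths (m : ℕ) (u v : List Bool) : Finset ℕ :=
  (range (m + 1)).filter fun i => u.take i = v.take i

theorem take_eq_take_of_le {u v : List Bool} {i j : ℕ} (hij : i ≤ j) (h : u.take j = v.take j) :
    u.take i = v.take i := by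
  rw [← min_eq_left hij, ← List.take_take, h, List.take_take]

theorem card_commonPrefixes_le_card_agreeLengths (N : ℕ) (u v : List Bool) :
    (commonPrefixes N u v).card ≤ (agreeLengths (min u.length v.length) u v).card := by
  refine card_le_card_of_injOn List.length (fun α hα => ?_) (fun α hα β hβ h => ?_)
  · simp only [commonPrefixes, mem_coe, mem_filter] at hα
    simp only [agreeLengths, mem_coe, mem_filter, mem_range, Nat.lt_succ_iff, le_min_iff]
    exact ⟨⟨hα.2.1.length_le, hα.2.2.length_le⟩,
      (List.prefix_iff_eq_take.mp hα.2.1).symm.trans (List.prefix_iff_eq_take.mp hα.2.2)⟩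
  · simp only [commonPrefixes, mem_coe, mem_filter] at hα hβ
    rw [List.prefix_iff_eq_take.mp hα.2.1, List.prefix_iff_eq_take.mp hβ.2.1, h]

theorem card_commonPrefixes_le (N : ℕ) (u v : List Bool) :
    (commonPrefixes N u v).card ≤ min u.length v.length + 1 :=
  (card_commonPrefixes_le_card_agreeLengths N u v).trans
    ((card_filter_le _ _).trans (card_range _).le)

theorem card_commonPrefixes_append_le (N : ℕ) {a b : List Bool} (u v : List Bool) (hab : a ≠ b)
    (hlen : a.length = b.length) :
    (commonPrefixes N (a ++ u) (b ++ v)).card ≤ (agreeLengths a.length a b).card := by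
  refine (card_commonPrefixes_le_card_agreeLengths N _ _).trans (card_le_card fun i hi => ?_)
  simp only [agreeLengths, mem_filter, mem_range] at hi ⊢
  have hia : i ≤ a.length := by
    by_contra! hai
    have := congrArg (List.take a.length) hi.2
    rw [List.take_take, List.take_take, min_eq_left hai.le, List.take_left' rfl,
      hlen, List.take_left' rfl] at this
    exact hab this
  refine ⟨by omega, ?_⟩
  rw [← List.take_append_of_le_length hia, hi.2, List.take_append_of_le_length (hlen ▸ hia)]

theorem card_agreeLengths_sq (m : ℕ) (u v : List Bool) :
    (agreeLengths m u v).card ^ 2 = ∑ i ∈ range (m + 1), ∑ j ∈ range (m + 1),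
      if u.take (max i j) = v.take (max i j) then 1 else 0 := by
  rw [sq, ← card_product, agreeLengths, ← filter_product, card_filter, sum_product]
  refine sum_congr rfl fun i _ => sum_congr rfl fun j _ => if_congr ?_ rfl rfl
  exact ⟨fun ⟨hi, hj⟩ => by rcases le_total i j with h | h <;> simp [h, hi, hj],
    fun h => ⟨take_eq_take_of_le (le_max_left i j) h, take_eq_take_of_le (le_max_right i j) h⟩⟩

theorem sum_card_agreeLengths_sq {M : ℕ} {a : List Bool} (ha : a.length = M) :
    ∑ b ∈ treeLevel M, (agreeLengths M a b).card ^ 2 =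
      ∑ i ∈ range (M + 1), ∑ j ∈ range (M + 1), 2 ^ (M - max i j) := by
  simp only [card_agreeLengths_sq]
  rw [sum_comm]
  refine sum_congr rfl fun i hi => ?_
  rw [sum_comm]
  refine sum_congr rfl fun j hj => ?_
  have hmax : max i j ≤ M := by simp only [mem_range] at hi hj; omega
  rw [← card_filter, card_filter_take_eq hmax (ha ▸ hmax)]

theorem sum_sum_card_agreeLengths_sq_le (M : ℕ) :
    ∑ a ∈ treeLevel M, ∑ b ∈ treeLevel M, (agreeLengths M a b).card ^ 2 ≤ 6 * (2 ^ M) ^ 2 := by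
  calc ∑ a ∈ treeLevel M, ∑ b ∈ treeLevel M, (agreeLengths M a b).card ^ 2
      ≤ ∑ _a ∈ treeLevel M, 6 * 2 ^ M := sum_le_sum fun a ha => by
        have := sum_sum_two_pow_sub_max_le (M + 1)
        rw [Nat.add_sub_cancel, pow_succ] at this
        rw [sum_card_agreeLengths_sq (mem_treeLevel.mp ha)]
        omega
    _ = 6 * (2 ^ M) ^ 2 := by rw [sum_const, card_treeLevel, smul_eq_mul]; ring

section BiTree

variable (N : ℕ)

theorem sum_mul_biI_eq_sum_biIstar_mul (μ f : List Bool × List Bool → ℝ) :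
    ∑ p ∈ biVertices N, μ p * biI N f p = ∑ q ∈ biVertices N, biIstar N μ q * f q := by
  simp only [biI, biIstar, mul_sum, sum_mul]
  exact sum_comm' fun p q => by simp only [mem_filter]; tauto

theorem biMass_sq_le_biEnergy_mul {E : Set (List Bool × List Bool)}
    {μ f : List Bool × List Bool → ℝ} (hμ : ∀ p, 0 ≤ μ p) (hμE : ∀ p, μ p ≠ 0 → p ∈ E)
    (hfE : ∀ p ∈ E, 1 ≤ biI N f p) :
    biMass N μ ^ 2 ≤ biEnergy N μ * ∑ p ∈ biVertices N, f p ^ 2 := by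
  have hmass : biMass N μ ≤ ∑ q ∈ biVertices N, biIstar N μ q * f q := by
    rw [← sum_mul_biI_eq_sum_biIstar_mul]
    refine sum_le_sum fun p _ => ?_
    by_cases h : μ p = 0
    · simp [h]
    · exact le_mul_of_one_le_right (hμ p) (hfE p (hμE p h))
  calc biMass N μ ^ 2 ≤ (∑ q ∈ biVertices N, biIstar N μ q * f q) ^ 2 :=
        pow_le_pow_left₀ (sum_nonneg fun p _ => hμ p) hmass 2
    _ ≤ biEnergy N μ * ∑ p ∈ biVertices N, f p ^ 2 := sum_mul_sq_le_sq_mul_sq _ _ _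

theorem root_mem_biVertices : (([] : List Bool), ([] : List Bool)) ∈ biVertices N :=
  mem_product.mpr ⟨mem_strings.mpr (Nat.zero_le _), mem_strings.mpr (Nat.zero_le _)⟩

theorem one_mem_biCap_set (E : Set (List Bool × List Bool)) :
    (1 : ℝ) ∈ { t : ℝ | ∃ f : List Bool × List Bool → ℝ, (∀ p, 0 ≤ f p) ∧
      (∀ p ∈ E, 1 ≤ biI N f p) ∧ t = ∑ p ∈ biVertices N, (f p) ^ 2 } := by
  refine ⟨fun p => if p = ([], []) then 1 else 0, fun p => by positivity, fun p _ => ?_, ?_⟩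
  · rw [biI, sum_ite_eq', if_pos (mem_filter.mpr ⟨root_mem_biVertices N, by simp⟩)]
  · simp [sum_ite_eq', root_mem_biVertices]

theorem biCap_le_one (E : Set (List Bool × List Bool)) : biCap N E ≤ 1 :=
  csInf_le ⟨0, fun _ ⟨_, _, _, ht⟩ => ht ▸ by positivity⟩ (one_mem_biCap_set N E)

theorem biCap_nonneg (E : Set (List Bool × List Bool)) : 0 ≤ biCap N E :=
  Real.sInf_nonneg fun _ ⟨_, _, _, ht⟩ => ht ▸ by positivity

theorem biMass_sq_le_biEnergy_mul_biCap {E : Set (List Bool × List Bool)}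
    {μ : List Bool × List Bool → ℝ} (hμ : ∀ p, 0 ≤ μ p) (hμE : ∀ p, μ p ≠ 0 → p ∈ E) :
    biMass N μ ^ 2 ≤ biEnergy N μ * biCap N E := by
  have hS := one_mem_biCap_set N E
  rcases (by unfold biEnergy; positivity : 0 ≤ biEnergy N μ).eq_or_lt with h0 | hpos
  · obtain ⟨f, -, hf, -⟩ := hS
    simpa [← h0] using biMass_sq_le_biEnergy_mul N hμ hμE hf
  · rw [← div_le_iff₀' hpos]
    refine le_csInf ⟨1, hS⟩ ?_
    rintro t ⟨f, -, hf, rfl⟩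
    rw [div_le_iff₀' hpos]
    exact biMass_sq_le_biEnergy_mul N hμ hμE hf

theorem card_filter_biVertices_prefix_both (x y : List Bool × List Bool) :
    ((biVertices N).filter fun q => (q.1 <+: x.1 ∧ q.2 <+: x.2) ∧ (q.1 <+: y.1 ∧ q.2 <+: y.2)).card
      = (commonPrefixes N x.1 y.1).card * (commonPrefixes N x.2 y.2).card := by
  rw [← card_product, commonPrefixes, commonPrefixes, ← filter_product, biVertices]
  congr 1
  exact filter_congr fun q _ => by tauto

theorem biEnergy_eq_sum_sum (μ : List Bool × List Bool → ℝ) :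
    biEnergy N μ = ∑ x ∈ biVertices N, ∑ y ∈ biVertices N,
      μ x * μ y * ((commonPrefixes N x.1 y.1).card * (commonPrefixes N x.2 y.2).card : ℕ) := by
  have hIstar : ∀ q, biIstar N μ q =
      ∑ x ∈ biVertices N, if q.1 <+: x.1 ∧ q.2 <+: x.2 then μ x else 0 := fun q => sum_filter _ _
  simp only [biEnergy, hIstar, sq, sum_mul_sum, ite_zero_mul_ite_zero]
  rw [sum_comm]
  refine sum_congr rfl fun x _ => ?_
  rw [sum_comm]
  refine sum_congr rfl fun y _ => ?_
  rw [← sum_filter, sum_const, nsmul_eq_mul, card_filter_biVertices_prefix_both, mul_comm]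

theorem biMass_indicator {S : Finset (List Bool × List Bool)} (hS : S ⊆ biVertices N) :
    biMass N (fun p => if p ∈ S then 1 else 0) = S.card := by
  rw [biMass, sum_boole, filter_mem_eq_inter, inter_eq_right.mpr hS]

theorem biEnergy_indicator {S : Finset (List Bool × List Bool)} (hS : S ⊆ biVertices N) :
    biEnergy N (fun p => if p ∈ S then 1 else 0) = ∑ x ∈ S, ∑ y ∈ S,
      ((commonPrefixes N x.1 y.1).card * (commonPrefixes N x.2 y.2).card : ℕ) := by
  simp [biEnergy_eq_sum_sum, ite_mul, sum_ite_mem, inter_eq_right.mpr hS]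

end BiTree

section Diagonal

variable (s : ℕ)

def diagIndex : Finset (List Bool × ℕ) := treeLevel (2 ^ s - s) ×ˢ range (2 ^ s + 1)

def diagFinset : Finset (List Bool × List Bool) := (diagIndex s).image fun x => diagQ s x.1 x.2

variable {s}

theorem mem_diagIndex {x : List Bool × ℕ} :
    x ∈ diagIndex s ↔ x.1.length = 2 ^ s - s ∧ x.2 ≤ 2 ^ s := by
  simp [diagIndex, mem_treeLevel]

theorem diagQ_fst_length (a : List Bool) {k : ℕ} (hk : k ≤ 2 ^ s) :
    (diagQ s a k).1.length = a.length + 2 ^ (2 ^ s - k) := by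
  simp [diagQ, Nat.pow_div hk two_pos]

theorem diagQ_snd_length (a : List Bool) (k : ℕ) :
    (diagQ s a k).2.length = a.length + 2 ^ k := by
  simp [diagQ]

theorem diagQ_injOn : Set.InjOn (fun x : List Bool × ℕ => diagQ s x.1 x.2) (diagIndex s) := by
  rintro ⟨a, k⟩ hx ⟨b, l⟩ hy h
  have hlen : a.length = b.length := (mem_diagIndex.mp hx).1.trans (mem_diagIndex.mp hy).1.symm
  have h2 : a ++ List.replicate (2 ^ k) false = b ++ List.replicate (2 ^ l) false :=
    congrArg Prod.snd h
  obtain ⟨rfl, hkl⟩ := List.append_inj h2 hlen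
  simpa using hkl

theorem card_diagFinset : (diagFinset s).card = 2 ^ (2 ^ s - s) * (2 ^ s + 1) := by
  rw [diagFinset, card_image_of_injOn diagQ_injOn, diagIndex, card_product, card_treeLevel,
    card_range]

theorem diagFinset_subset_biVertices : diagFinset s ⊆ biVertices (2 ^ 2 ^ s + (2 ^ s - s)) := by
  intro p hp
  obtain ⟨⟨a, k⟩, hx, rfl⟩ := mem_image.mp hp
  obtain ⟨ha, hk⟩ : a.length = 2 ^ s - s ∧ k ≤ 2 ^ s := mem_diagIndex.mp hx
  have h1 : 2 ^ (2 ^ s - k) ≤ 2 ^ 2 ^ s := Nat.pow_le_pow_right two_pos (Nat.sub_le _ _)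
  have h2 : 2 ^ k ≤ 2 ^ 2 ^ s := Nat.pow_le_pow_right two_pos hk
  refine mem_product.mpr ⟨mem_strings.mpr ?_, mem_strings.mpr ?_⟩
  · rw [diagQ_fst_length a hk, ha]; omega
  · rw [diagQ_snd_length a k, ha]; omega

theorem coe_diagFinset_subset_diagF : (diagFinset s : Set (List Bool × List Bool)) ⊆ diagF s := by
  intro p hp
  obtain ⟨⟨a, k⟩, hx, rfl⟩ := mem_image.mp hp
  exact ⟨a, k, (mem_diagIndex.mp hx).1, (mem_diagIndex.mp hx).2, rfl⟩

theorem card_commonPrefixes_diagQ_le (N : ℕ) {a b : List Bool} {k l : ℕ}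
    (ha : a.length = 2 ^ s - s) (hb : b.length = 2 ^ s - s) (hk : k ≤ 2 ^ s) (hl : l ≤ 2 ^ s) :
    (commonPrefixes N (diagQ s a k).1 (diagQ s b l).1).card *
        (commonPrefixes N (diagQ s a k).2 (diagQ s b l).2).card ≤
      (if a = b then
        (2 ^ s - s + 1 + 2 ^ (2 ^ s - max k l)) * (2 ^ s - s + 1 + 2 ^ min k l) else 0) +
      (agreeLengths (2 ^ s - s) a b).card ^ 2 := by
  by_cases hab : a = b
  · subst hab
    rw [if_pos rfl]
    refine le_add_right (Nat.mul_le_mul ((card_commonPrefixes_le N _ _).trans ?_)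
      ((card_commonPrefixes_le N _ _).trans ?_))
    · rw [diagQ_fst_length a hk, diagQ_fst_length a hl, ha]
      rcases le_total k l with h | h
      · rw [max_eq_right h]; omega
      · rw [max_eq_left h]; omega
    · rw [diagQ_snd_length, diagQ_snd_length, ha]
      rcases le_total k l with h | h
      · rw [min_eq_left h]; omega
      · rw [min_eq_right h]; omega
  · rw [if_neg hab, zero_add, sq, ← ha]
    exact Nat.mul_le_mul (card_commonPrefixes_append_le N _ _ hab (ha.trans hb.symm))
      (card_commonPrefixes_append_le N _ _ hab (ha.trans hb.symm))

theorem sum_sum_diagFinset_le (N : ℕ) {s : ℕ} (hs : 4 ≤ s) :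
    ∑ x ∈ diagFinset s, ∑ y ∈ diagFinset s,
      (commonPrefixes N x.1 y.1).card * (commonPrefixes N x.2 y.2).card ≤
      25 * (diagFinset s).card ^ 2 := by
  set M := 2 ^ s - s
  set K := 2 ^ s
  have hpow : 2 ^ K = 2 ^ M * K := by rw [← pow_add, Nat.sub_add_cancel s.lt_two_pow_self.le]
  have hD := sum_diagonal_kernel_le (Nat.sub_le K s) hpow
    (succ_sq_le_two_pow (six_le_two_pow_sub_self hs))
  have hd := sum_sum_card_agreeLengths_sq_le M
  rw [card_diagFinset, diagFinset, sum_image diagQ_injOn]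
  simp_rw [sum_image diagQ_injOn]
  calc _ ≤ ∑ x ∈ diagIndex s, ∑ y ∈ diagIndex s,
        ((if x.1 = y.1 then (M + 1 + 2 ^ (K - max x.2 y.2)) * (M + 1 + 2 ^ min x.2 y.2) else 0) +
          (agreeLengths M x.1 y.1).card ^ 2) :=
        sum_le_sum fun x hx => sum_le_sum fun y hy =>
          card_commonPrefixes_diagQ_le N (mem_diagIndex.mp hx).1 (mem_diagIndex.mp hy).1
            (mem_diagIndex.mp hx).2 (mem_diagIndex.mp hy).2
    _ = 2 ^ M * ∑ k ∈ range (K + 1), ∑ l ∈ range (K + 1),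
          (M + 1 + 2 ^ (K - max k l)) * (M + 1 + 2 ^ min k l) +
        (K + 1) ^ 2 * ∑ a ∈ treeLevel M, ∑ b ∈ treeLevel M, (agreeLengths M a b).card ^ 2 := by
      have := sum_sum_product_ite_add (treeLevel M) (range (K + 1))
        (fun k l => (M + 1 + 2 ^ (K - max k l)) * (M + 1 + 2 ^ min k l))
        (fun a b => (agreeLengths M a b).card ^ 2)
      rwa [card_treeLevel, card_range] at this
    _ ≤ 2 ^ M * (19 * 2 ^ M * (K + 1) ^ 2) + (K + 1) ^ 2 * (6 * (2 ^ M) ^ 2) := by gcongr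
    _ = 25 * (2 ^ M * (K + 1)) ^ 2 := by ring

end Diagonal

/-- **In the diagonal construction, `cap F ≍ 1`** (on the bi-tree of depth `N = n + M`). -/
theorem stmt17 : ∃ c₀ : ℝ, 0 < c₀ ∧ ∃ s₀ : ℕ, ∀ s : ℕ, s₀ ≤ s →
    c₀ ≤ biCap (2 ^ 2 ^ s + (2 ^ s - s)) (diagF s) ∧
    biCap (2 ^ 2 ^ s + (2 ^ s - s)) (diagF s) ≤ 1 := by
  refine ⟨1 / 25, by norm_num, 4, fun s hs => ⟨?_, biCap_le_one _ _⟩⟩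
  set N := 2 ^ 2 ^ s + (2 ^ s - s)
  have hsub : diagFinset s ⊆ biVertices N := diagFinset_subset_biVertices
  set μ : List Bool × List Bool → ℝ := fun p => if p ∈ diagFinset s then 1 else 0
  have hcap := biMass_sq_le_biEnergy_mul_biCap N (E := diagF s) (μ := μ) (fun p => by positivity)
    fun p hp => coe_diagFinset_subset_diagF (by_contra fun h => hp (if_neg h))
  have henergy : biEnergy N μ ≤ 25 * biMass N μ ^ 2 := by
    rw [biEnergy_indicator N hsub, biMass_indicator N hsub]
    exact_mod_cast sum_sum_diagFinset_le N hs
  have hmass : 0 < biMass N μ ^ 2 := by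
    rw [biMass_indicator N hsub, card_diagFinset]
    positivity
  nlinarith [mul_le_mul_of_nonneg_right henergy (biCap_nonneg N (diagF s))]
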